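/- arXiv:2406.01565 — 7 statements merged into one kernel-verified Lean document; each statement's English description precedes it below -/
import Mathlib

section
/- For every d ≥ 3, the coefficient a_0 = 4d·C(2d-2, d-1) - 4^d is strictly positive. -/
theorem Nat.four_pow_lt_succ_mul_centralBinom {n : ℕ} (hn : 2 ≤ n) :
    4 ^ n < (n + 1) * n.centralBinom := by
  obtain hsmall | hlarge := lt_or_ge n 4
  · interval_cases n <;> decide
  · calc 4 ^ n < n * n.centralBinom := Nat.four_pow_lt_mul_centralBinom n hlarge
      _ ≤ (n + 1) * n.centralBinom := Nat.mul_le_mul_right _ n.le_succ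

theorem a0_positive (d : ℕ) (hd : 3 ≤ d) :
    (0 : ℝ) < 4 * d * Nat.choose (2 * d - 2) (d - 1) - 4 ^ d := by
  obtain ⟨n, rfl⟩ : ∃ n, d = n + 1 := ⟨d - 1, by omega⟩
  have hbound := Nat.four_pow_lt_succ_mul_centralBinom (n := n) (by omega)
  have hindex : 2 * (n + 1) - 2 = 2 * n := by omega
  rw [hindex, Nat.add_sub_cancel, sub_pos, pow_succ', mul_assoc]
  exact_mod_cast Nat.mul_lt_mul_of_pos_left hbound (by norm_num)
end

section
/- For d ≥ 3 and 1 ≤ k ≤ d-1, the coefficient a_k = 2^{k+1}(2d·C(2d-k-2, d-1) - (d-1)·C(2d-k-1, d-1)) is nonnegative if and only if k ≤ (3d-1)/(d+1). -/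
/-!
The identity `C(n + 1, r) (n + 1 - r) = C(n, r) (n + 1)` with `n = 2d - k - 2`, `r = d - 1`
turns the sign condition `(d - 1) C(2d - k - 1, d - 1) ≤ 2d C(2d - k - 2, d - 1)` into the
polynomial inequality `(d - 1)(2d - k - 1) ≤ 2d (d - k)`, which rearranges to `k (d + 1) ≤ 3d - 1`.
-/

theorem mul_choose_succ_le_mul_choose_iff {K : Type*} [Field K] [LinearOrder K]
    [IsStrictOrderedRing K] {n r : ℕ} (h : r ≤ n) (p q : K) :
    p * (n + 1).choose r ≤ q * n.choose r ↔ p * (n + 1 : ℕ) ≤ q * (n + 1 - r : ℕ) := by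
  have hC : (0 : K) < n.choose r := by exact_mod_cast Nat.choose_pos h
  have hs : (0 : K) < (n + 1 - r : ℕ) := by exact_mod_cast Nat.sub_pos_of_lt (Nat.lt_succ_of_le h)
  have key : ((n + 1).choose r : K) * (n + 1 - r : ℕ) = n.choose r * (n + 1 : ℕ) := by
    exact_mod_cast (Nat.choose_mul_succ_eq n r).symm
  calc p * (n + 1).choose r ≤ q * n.choose r
      ↔ p * (n + 1).choose r * (n + 1 - r : ℕ) ≤ q * n.choose r * (n + 1 - r : ℕ) :=
        (mul_le_mul_iff_of_pos_right hs).symm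
    _ ↔ n.choose r * (p * (n + 1 : ℕ)) ≤ n.choose r * (q * (n + 1 - r : ℕ)) := by
        rw [mul_assoc p, key]; ring_nf
    _ ↔ p * (n + 1 : ℕ) ≤ q * (n + 1 - r : ℕ) := mul_le_mul_iff_of_pos_left hC

theorem ak_nonneg_iff_general (d k : ℕ) (hk1 : 1 ≤ k) (hk2 : k ≤ d - 1) :
    (0 : ℝ) ≤ 2 ^ (k + 1) *
        (2 * d * Nat.choose (2 * d - k - 2) (d - 1) -
          ((d : ℝ) - 1) * Nat.choose (2 * d - k - 1) (d - 1)) ↔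
      (k : ℚ) ≤ (3 * d - 1) / (d + 1) := by
  -- writing `d = k + 1 + m` removes every truncated subtraction
  obtain ⟨m, rfl⟩ : ∃ m, d = k + 1 + m := ⟨d - 1 - k, by omega⟩
  have hn : 2 * (k + 1 + m) - k - 2 = k + 2 * m := by omega
  have hn1 : 2 * (k + 1 + m) - k - 1 = k + 2 * m + 1 := by omega
  have hr : k + 1 + m - 1 = k + m := by omega
  have hs : k + 2 * m + 1 - (k + m) = m + 1 := by omega
  rw [hn, hn1, hr, mul_nonneg_iff_of_pos_left (by positivity), sub_nonneg,
    mul_choose_succ_le_mul_choose_iff (by omega), hs, le_div_iff₀ (by positivity)]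
  have hℝ : ((k + 1 + m : ℕ) - 1 : ℝ) * (k + 2 * m + 1 : ℕ) ≤ 2 * (k + 1 + m : ℕ) * (m + 1 : ℕ) ↔
      k * k + k * m ≤ k + 3 * m + 2 := by
    rw [← Nat.cast_le (α := ℝ)]; push_cast; constructor <;> intro h <;> linarith
  have hℚ : (k : ℚ) * ((k + 1 + m : ℕ) + 1) ≤ 3 * (k + 1 + m : ℕ) - 1 ↔
      k * k + k * m ≤ k + 3 * m + 2 := by
    rw [← Nat.cast_le (α := ℚ)]; push_cast; constructor <;> intro h <;> linarith
  rw [hℝ, hℚ]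

theorem ak_nonneg_iff (d k : ℕ) (hd : 3 ≤ d) (hk1 : 1 ≤ k) (hk2 : k ≤ d - 1) :
    (0 : ℝ) ≤ 2 ^ (k + 1) *
        (2 * d * Nat.choose (2 * d - k - 2) (d - 1) -
          ((d : ℝ) - 1) * Nat.choose (2 * d - k - 1) (d - 1)) ↔
      (k : ℚ) ≤ (3 * d - 1) / (d + 1) :=
  ak_nonneg_iff_general d k hk1 hk2
end

section
/- For all real numbers ℓ > 0, 0 < a < ℓ and d ≥ 2, the polynomial identity Σ_{k=0}^{d} a_k = 0 holds, where a_0 = 4d·C(2d-2,d-1) - 4^d, a_d = -2^{d+1}(d-1), and a_k = 2^{k+1}(2d·C(2d-k-2,d-1) - (d-1)·C(2d-k-1,d-1)) for 1 ≤ k ≤ d-1; i.e., x = 1 is a root of the Mahler polynomial p_d(x) = Σ_{k=0}^d a_k x^k. -/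
open Finset in
lemma key_identity (n : ℕ) :
    ∑ k ∈ Finset.range (n + 1), 2 ^ k * (2 * n - k).choose n = 4 ^ n := by
  induction n with
  | zero => simp
  | succ n ih =>
    set T1 := ∑ k ∈ Finset.range (n + 2), 2 ^ k * (2 * (n + 1) - k).choose (n + 1) with hT1
    have hsplit : T1 =
        (∑ k ∈ Finset.range (n + 2), 2 ^ k * (2 * n + 1 - k).choose n) +
        (∑ k ∈ Finset.range (n + 2), 2 ^ k * (2 * n + 1 - k).choose (n + 1)) := by
      rw [← Finset.sum_add_distrib]
      apply Finset.sum_congr rfl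
      intro k hk
      rw [Finset.mem_range] at hk
      have h1 : 2 * (n + 1) - k = (2 * n + 1 - k) + 1 := by omega
      rw [h1, Nat.choose_succ_succ, Nat.mul_add]
    have hP : (∑ k ∈ Finset.range (n + 2), 2 ^ k * (2 * n + 1 - k).choose n) =
        2 * (∑ k ∈ Finset.range (n + 1), 2 ^ k * (2 * n - k).choose n) + (2 * n + 1).choose n := by
      rw [Finset.sum_range_succ', Finset.mul_sum]
      congr 1
      · apply Finset.sum_congr rfl
        intro k hk
        rw [Finset.mem_range] at hk
        have h2 : 2 * n + 1 - (k + 1) = 2 * n - k := by omega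
        rw [h2, pow_succ]
        ring
      · simp
    have hQlast : (∑ k ∈ Finset.range (n + 2), 2 ^ k * (2 * n + 1 - k).choose (n + 1)) =
        ∑ k ∈ Finset.range (n + 1), 2 ^ k * (2 * n + 1 - k).choose (n + 1) := by
      rw [Finset.sum_range_succ]
      have : 2 * n + 1 - (n + 1) = n := by omega
      rw [this, Nat.choose_eq_zero_of_lt (by omega)]
      simp
    have hT2 : T1 = 2 * (∑ k ∈ Finset.range (n + 1), 2 ^ k * (2 * n + 1 - k).choose (n + 1)) +
        (2 * n + 2).choose (n + 1) := by
      rw [hT1, Finset.sum_range_succ', Finset.mul_sum]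
      congr 1
      · apply Finset.sum_congr rfl
        intro k hk
        rw [Finset.mem_range] at hk
        have h3 : 2 * (n + 1) - (k + 1) = 2 * n + 1 - k := by omega
        rw [h3, pow_succ]
        ring
      · have h4 : 2 * (n + 1) - 0 = 2 * n + 2 := by omega
        rw [h4]; simp
    have hc : (2 * n + 2).choose (n + 1) = 2 * (2 * n + 1).choose n := by
      have h5 : 2 * n + 2 = (2 * n + 1) + 1 := by omega
      rw [h5, Nat.choose_succ_succ]
      have h6 : (2 * n + 1).choose (n + 1) = (2 * n + 1).choose n := by
        have := Nat.choose_symm (n := 2 * n + 1) (k := n) (by omega)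
        have h7 : 2 * n + 1 - n = n + 1 := by omega
        rw [h7] at this
        exact this
      simp only [Nat.succ_eq_add_one] at *
      omega
    show T1 = 4 ^ (n + 1)
    rw [pow_succ, ← ih]
    rw [hsplit] at hT2 ⊢
    rw [hQlast] at hT2 ⊢
    rw [hP]
    rw [hP] at hT2
    omega

lemma fact1 (n : ℕ) :
    2 * (∑ k ∈ Finset.range (n + 1), (2:ℝ) ^ k * ((2 * n + 1 - k).choose (n + 1) : ℝ)) +
      ((2 * n + 2).choose (n + 1) : ℝ) = 4 ^ (n + 1) := by
  have h := key_identity (n + 1)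
  rw [Finset.sum_range_succ'] at h
  have h' : (∑ k ∈ Finset.range (n + 1), 2 ^ (k + 1) * (2 * n + 1 - k).choose (n + 1)) +
      (2 * n + 2).choose (n + 1) = 4 ^ (n + 1) := by
    rw [← h]
    congr 1
    · apply Finset.sum_congr rfl
      intro k hk
      rw [Finset.mem_range] at hk
      have : 2 * (n + 1) - (k + 1) = 2 * n + 1 - k := by omega
      rw [this]
    · have : 2 * (n + 1) - 0 = 2 * n + 2 := by omega
      rw [this]; simp
  have hc := congrArg (Nat.cast : ℕ → ℝ) h'
  push_cast at hc
  rw [← hc, Finset.mul_sum]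
  congr 1
  apply Finset.sum_congr rfl
  intro k _
  rw [pow_succ]
  ring

lemma fact2 (n : ℕ) :
    (∑ k ∈ Finset.range (n + 1), (2:ℝ) ^ k * ((2 * n + 2 - k).choose (n + 1) : ℝ)) +
      2 ^ (n + 1) = 4 ^ (n + 1) := by
  have h := key_identity (n + 1)
  rw [Finset.sum_range_succ] at h
  have h' : (∑ k ∈ Finset.range (n + 1), 2 ^ k * (2 * n + 2 - k).choose (n + 1)) +
      2 ^ (n + 1) = 4 ^ (n + 1) := by
    have hlast : 2 ^ (n + 1) * (2 * (n + 1) - (n + 1)).choose (n + 1) = 2 ^ (n + 1) := by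
      have : 2 * (n + 1) - (n + 1) = n + 1 := by omega
      rw [this, Nat.choose_self, Nat.mul_one]
    rw [← h, hlast]
    congr 1
  have hc := congrArg (Nat.cast : ℕ → ℝ) h'
  push_cast at hc
  exact hc

theorem mahler_poly_root_one (d : ℕ) (hd : 2 ≤ d) (ℓ a : ℝ)
    (hℓ : 0 < ℓ) (ha : 0 < a) (haℓ : a < ℓ) :
    ∑ k ∈ Finset.range (d + 1),
      (if k = 0 then 4 * (d : ℝ) * Nat.choose (2 * d - 2) (d - 1) - 4 ^ d
       else if k = d then -2 ^ (d + 1) * ((d : ℝ) - 1)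
       else 2 ^ (k + 1) *
         (2 * (d : ℝ) * Nat.choose (2 * d - k - 2) (d - 1) -
           ((d : ℝ) - 1) * Nat.choose (2 * d - k - 1) (d - 1))) = 0 := by
  obtain ⟨n, rfl⟩ : ∃ n, d = n + 2 := ⟨d - 2, by omega⟩
  rw [Finset.sum_range_succ, Finset.sum_range_succ']
  have hmid : ∀ k ∈ Finset.range (n + 1),
      (if k + 1 = 0 then 4 * ((n + 2 : ℕ) : ℝ) * Nat.choose (2 * (n + 2) - 2) ((n + 2) - 1) - 4 ^ (n + 2)
       else if k + 1 = n + 2 then -2 ^ ((n + 2) + 1) * (((n + 2 : ℕ) : ℝ) - 1)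
       else 2 ^ ((k + 1) + 1) *
         (2 * ((n + 2 : ℕ) : ℝ) * Nat.choose (2 * (n + 2) - (k + 1) - 2) ((n + 2) - 1) -
           (((n + 2 : ℕ) : ℝ) - 1) * Nat.choose (2 * (n + 2) - (k + 1) - 1) ((n + 2) - 1)))
      = 2 ^ (k + 2) *
         (2 * ((n : ℝ) + 2) * ((2 * n + 1 - k).choose (n + 1) : ℝ) -
           ((n : ℝ) + 1) * ((2 * n + 2 - k).choose (n + 1) : ℝ)) := by
    intro k hk
    rw [Finset.mem_range] at hk
    rw [if_neg (by omega), if_neg (by omega)]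
    have e1 : 2 * (n + 2) - (k + 1) - 2 = 2 * n + 1 - k := by omega
    have e2 : 2 * (n + 2) - (k + 1) - 1 = 2 * n + 2 - k := by omega
    have e3 : (n + 2) - 1 = n + 1 := by omega
    rw [e1, e2, e3]
    push_cast
    ring
  rw [Finset.sum_congr rfl hmid]
  have expand : ∀ k ∈ Finset.range (n + 1),
      (2:ℝ) ^ (k + 2) *
         (2 * ((n : ℝ) + 2) * ((2 * n + 1 - k).choose (n + 1) : ℝ) -
           ((n : ℝ) + 1) * ((2 * n + 2 - k).choose (n + 1) : ℝ))
      = 8 * ((n : ℝ) + 2) * ((2:ℝ) ^ k * ((2 * n + 1 - k).choose (n + 1) : ℝ)) -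
        4 * ((n : ℝ) + 1) * ((2:ℝ) ^ k * ((2 * n + 2 - k).choose (n + 1) : ℝ)) := by
    intro k _
    rw [pow_add]
    ring
  rw [Finset.sum_congr rfl expand, Finset.sum_sub_distrib, ← Finset.mul_sum, ← Finset.mul_sum]
  rw [if_pos rfl, if_neg (by omega), if_pos rfl]
  have e0 : 2 * (n + 2) - 2 = 2 * n + 2 := by omega
  have e3 : (n + 2) - 1 = n + 1 := by omega
  rw [e0, e3]
  have h1 := fact1 n
  have h2 := fact2 n
  push_cast
  linear_combination (4 * ((n:ℝ) + 2)) * h1 - (4 * ((n:ℝ) + 1)) * h2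
end

section
/- For every d ≥ 2 and every real x with 0 < x < 1, the polynomial p_d(x) = Σ_{k=0}^d a_k x^k is strictly positive, where a_0 = 4d·C(2d-2,d-1) - 4^d, a_d = -2^{d+1}(d-1), and a_k = 2^{k+1}(2d·C(2d-k-2,d-1) - (d-1)·C(2d-k-1,d-1)) for 1 ≤ k ≤ d-1. -/
/-!
Since `p_d(1) = ∑ a_k = 0`, we may write `p_d(x) = ∑ a_k (x^k - x^2)`. On `(0, 1)` the factor
`x^k - x^2` is positive for `k = 0, 1`, zero for `k = 2` and nonpositive for `k ≥ 3`, while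
`a_0 ≥ 0`, `a_1 = 8 C(2d-3, d-1) > 0` and `a_k ≤ 0` for `k ≥ 3`; so every term is nonnegative and
the `k = 1` term is positive. The vanishing of `∑ a_k` reduces to
`∑_{k ≤ m} 2^k C(n+m-k, n) = ∑_{i ≤ m} C(n+m+1, i)` and `∑_{i ≤ n} C(2n+1, i) = 4^n`.
-/

open Finset

theorem sum_range_choose_succ_add_two (N m : ℕ) :
    ∑ i ∈ range (m + 2), (N + 1).choose i =
      2 * ∑ i ∈ range (m + 1), N.choose i + N.choose (m + 1) := by
  have shift : ∑ i ∈ range (m + 1), N.choose (i + 1) + 1 =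
      ∑ i ∈ range (m + 1), N.choose i + N.choose (m + 1) := by
    rw [← sum_range_succ (fun i => N.choose i), sum_range_succ' (fun i => N.choose i),
      Nat.choose_zero_right]
  rw [sum_range_succ', Nat.choose_zero_right]
  simp only [Nat.choose_succ_succ', sum_add_distrib]
  omega

/-- Counting words of length `n + m + 1` with at least `n + 1` zeros by the position of the
`(n + 1)`-st zero. -/
theorem sum_two_pow_mul_choose (n m : ℕ) :
    ∑ k ∈ range (m + 1), 2 ^ k * (n + m - k).choose n =
      ∑ i ∈ range (m + 1), (n + m + 1).choose i := by
  induction m with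
  | zero => simp
  | succ m ih =>
    rw [show n + (m + 1) + 1 = n + m + 1 + 1 by ring, sum_range_choose_succ_add_two, ← ih,
      sum_range_succ', mul_sum]
    congr 1
    · refine sum_congr rfl fun k _ => ?_
      rw [show n + (m + 1) - (k + 1) = n + m - k by omega, pow_succ]
      ring
    · rw [pow_zero, one_mul, Nat.sub_zero]
      exact Nat.choose_symm_of_eq_add (by omega)

theorem sum_two_pow_mul_choose_two_mul (n : ℕ) :
    ∑ k ∈ range (n + 1), 2 ^ k * (2 * n - k).choose n = 4 ^ n := by
  rw [two_mul, sum_two_pow_mul_choose, ← two_mul, Nat.sum_range_choose_halfway]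

theorem sum_two_pow_mul_choose_two_mul_add_one (n : ℕ) :
    ∑ k ∈ range (n + 2), 2 ^ k * (2 * n + 1 - k).choose n =
      2 * 4 ^ n + (2 * n + 1).choose n := by
  have h := sum_two_pow_mul_choose n (n + 1)
  rw [show n + (n + 1) = 2 * n + 1 by ring, sum_range_choose_succ_add_two,
    Nat.sum_range_choose_halfway, Nat.choose_symm_half] at h
  exact h

theorem four_pow_le_succ_mul_centralBinom (n : ℕ) : 4 ^ n ≤ (n + 1) * n.centralBinom := by
  rcases lt_or_ge n 4 with hn | hn
  · interval_cases n <;> decide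
  · exact (Nat.four_pow_lt_mul_centralBinom n hn).le.trans (by gcongr; omega)

theorem two_mul_choose_le_pred_mul_choose_succ (d k : ℕ) (hk : 3 ≤ k) (hkd : k < d) :
    2 * d * (2 * d - k - 2).choose (d - 1) ≤ (d - 1) * (2 * d - k - 1).choose (d - 1) := by
  obtain ⟨e, rfl⟩ : ∃ e, d = k + e + 1 := ⟨d - k - 1, by omega⟩
  have hrel := Nat.choose_mul_succ_eq (k + 2 * e) (k + e)
  rw [show k + 2 * e + 1 - (k + e) = e + 1 by omega] at hrel
  rw [show 2 * (k + e + 1) - k - 2 = k + 2 * e by omega,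
    show 2 * (k + e + 1) - k - 1 = k + 2 * e + 1 by omega, Nat.add_sub_cancel]
  refine Nat.le_of_mul_le_mul_right (c := k + 2 * e + 1) ?_ (by omega)
  calc 2 * (k + e + 1) * (k + 2 * e).choose (k + e) * (k + 2 * e + 1)
      = 2 * (k + e + 1) * (e + 1) * (k + 2 * e + 1).choose (k + e) := by
        rw [mul_assoc, hrel]; ring
    _ ≤ (k + e) * (k + 2 * e + 1) * (k + 2 * e + 1).choose (k + e) :=
        Nat.mul_le_mul_right _ (by nlinarith)
    _ = _ := by ring

theorem sum_mul_pow_pos_of_sum_eq_zero {a : ℕ → ℝ} {s : Finset ℕ} (hsum : ∑ k ∈ s, a k = 0)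
    (h₀ : 0 ≤ a 0) (h₁ : 1 ∈ s) (ha₁ : 0 < a 1) (hneg : ∀ k ∈ s, 3 ≤ k → a k ≤ 0)
    {x : ℝ} (hx₀ : 0 < x) (hx₁ : x < 1) : 0 < ∑ k ∈ s, a k * x ^ k := by
  have hshift : ∑ k ∈ s, a k * x ^ k = ∑ k ∈ s, a k * (x ^ k - x ^ 2) := by
    simp only [mul_sub, sum_sub_distrib, ← sum_mul, hsum, zero_mul, sub_zero]
  have hx₁' : x ^ 2 < x ^ 1 := pow_lt_pow_right_of_lt_one₀ hx₀ hx₁ one_lt_two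
  rw [hshift]
  refine sum_pos' (fun k hk => ?_) ⟨1, h₁, mul_pos ha₁ (sub_pos.2 hx₁')⟩
  match k with
  | 0 => exact mul_nonneg h₀ (sub_nonneg.2 (pow_le_one₀ hx₀.le hx₁.le))
  | 1 => exact mul_nonneg ha₁.le (sub_nonneg.2 hx₁'.le)
  | 2 => simp
  | k + 3 =>
    exact mul_nonneg_of_nonpos_of_nonpos (hneg _ hk (by omega))
      (sub_nonpos.2 (pow_le_pow_of_le_one hx₀.le hx₁.le (by omega)))

/-- The coefficient `a_k` of `p_d`. -/
noncomputable def mahlerCoeff (d k : ℕ) : ℝ :=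
  if k = 0 then 4 * (d : ℝ) * Nat.choose (2 * d - 2) (d - 1) - 4 ^ d
  else if k = d then -2 ^ (d + 1) * ((d : ℝ) - 1)
  else 2 ^ (k + 1) *
    (2 * (d : ℝ) * Nat.choose (2 * d - k - 2) (d - 1) -
      ((d : ℝ) - 1) * Nat.choose (2 * d - k - 1) (d - 1))

/-- For `k = d` the generic formula is still right (its first binomial vanishes); only `a_0`
needs a correction. -/
theorem mahlerCoeff_succ_eq (n k : ℕ) (hn : 1 ≤ n) (hk : k ≤ n + 1) :
    mahlerCoeff (n + 1) k =
      2 * (n + 1) * (2 * (2 ^ k * (2 * n - k).choose n : ℕ)) -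
        n * (2 * (2 ^ k * (2 * n + 1 - k).choose n : ℕ)) +
        (if k = 0 then 2 * n * (2 * n + 1).choose n - 4 ^ (n + 1) else 0 : ℝ) := by
  unfold mahlerCoeff
  rw [show 2 * (n + 1) - k - 2 = 2 * n - k by omega,
    show 2 * (n + 1) - k - 1 = 2 * n + 1 - k by omega, Nat.add_sub_cancel]
  push_cast
  split_ifs with h0 hlast
  · subst h0
    rw [show 2 * (n + 1) - 2 = 2 * n by omega, Nat.sub_zero, Nat.sub_zero]
    ring
  · subst hlast
    rw [show 2 * n - (n + 1) = n - 1 by omega, show 2 * n + 1 - (n + 1) = n by omega,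
      Nat.choose_eq_zero_of_lt (by omega : n - 1 < n), Nat.choose_self]
    push_cast; ring
  · ring

theorem sum_mahlerCoeff (d : ℕ) (hd : 2 ≤ d) : ∑ k ∈ range (d + 1), mahlerCoeff d k = 0 := by
  obtain ⟨n, rfl⟩ : ∃ n, d = n + 1 := ⟨d - 1, by omega⟩
  have hA : ∑ k ∈ range (n + 2), 2 ^ k * (2 * n - k).choose n = 4 ^ n := by
    rw [sum_range_succ, sum_two_pow_mul_choose_two_mul,
      Nat.choose_eq_zero_of_lt (by omega : 2 * n - (n + 1) < n), mul_zero, add_zero]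
  have hB := sum_two_pow_mul_choose_two_mul_add_one n
  rw [sum_congr rfl fun k hk =>
    mahlerCoeff_succ_eq n k (by omega) (Nat.lt_succ_iff.1 (mem_range.1 hk))]
  simp only [sum_add_distrib, sum_sub_distrib, ← mul_sum, ← Nat.cast_sum, hA, hB, sum_ite_eq']
  rw [if_pos (mem_range.2 (by omega))]
  push_cast
  ring

theorem mahlerCoeff_zero_nonneg (d : ℕ) (hd : 1 ≤ d) : 0 ≤ mahlerCoeff d 0 := by
  obtain ⟨n, rfl⟩ : ∃ n, d = n + 1 := ⟨d - 1, by omega⟩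
  have h := four_pow_le_succ_mul_centralBinom n
  rw [Nat.centralBinom_eq_two_mul_choose] at h
  have h' : (4 : ℝ) ^ n ≤ (n + 1) * (2 * n).choose n := by exact_mod_cast h
  simp only [mahlerCoeff, show 2 * (n + 1) - 2 = 2 * n by omega,
    Nat.add_sub_cancel, pow_succ]
  push_cast
  nlinarith

theorem mahlerCoeff_one_pos (d : ℕ) (hd : 2 ≤ d) : 0 < mahlerCoeff d 1 := by
  obtain ⟨n, rfl⟩ : ∃ n, d = n + 2 := ⟨d - 2, by omega⟩
  have hsplit : (2 * n + 2).choose (n + 1) = 2 * (2 * n + 1).choose (n + 1) := by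
    rw [Nat.choose_succ_succ', Nat.choose_symm_half]
    ring
  have hpos : (0 : ℝ) < (2 * n + 1).choose (n + 1) := by
    exact_mod_cast Nat.choose_pos (by omega)
  simp only [mahlerCoeff, one_ne_zero, if_false, if_neg (show 1 ≠ n + 2 by omega),
    show 2 * (n + 2) - 1 - 2 = 2 * n + 1 by omega, show 2 * (n + 2) - 1 - 1 = 2 * n + 2 by omega,
    show n + 2 - 1 = n + 1 by omega, hsplit]
  push_cast
  nlinarith

theorem mahlerCoeff_nonpos (d k : ℕ) (hk : 3 ≤ k) (hkd : k ≤ d) : mahlerCoeff d k ≤ 0 := by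
  have hd : (1 : ℝ) ≤ d := by exact_mod_cast (by omega : 1 ≤ d)
  rcases hkd.eq_or_lt with rfl | hlt
  · simp only [mahlerCoeff, if_neg (show k ≠ 0 by omega), if_true]
    nlinarith [pow_pos (two_pos : (0 : ℝ) < 2) (k + 1)]
  · have h : (2 * d * (2 * d - k - 2).choose (d - 1) : ℝ) ≤
        ((d - 1 : ℕ) * (2 * d - k - 1).choose (d - 1) : ℕ) := by
      exact_mod_cast two_mul_choose_le_pred_mul_choose_succ d k hk hlt
    rw [Nat.cast_mul, Nat.cast_sub (by omega), Nat.cast_one] at h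
    simp only [mahlerCoeff, if_neg (show k ≠ 0 by omega), if_neg hlt.ne]
    exact mul_nonpos_of_nonneg_of_nonpos (by positivity) (by linarith)

theorem mahler_poly_positive (d : ℕ) (hd : 2 ≤ d) (x : ℝ) (hx0 : 0 < x) (hx1 : x < 1) :
    0 < ∑ k ∈ Finset.range (d + 1),
      (if k = 0 then 4 * (d : ℝ) * Nat.choose (2 * d - 2) (d - 1) - 4 ^ d
       else if k = d then -2 ^ (d + 1) * ((d : ℝ) - 1)
       else 2 ^ (k + 1) *
         (2 * (d : ℝ) * Nat.choose (2 * d - k - 2) (d - 1) -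
           ((d : ℝ) - 1) * Nat.choose (2 * d - k - 1) (d - 1))) * x ^ k :=
  sum_mul_pow_pos_of_sum_eq_zero (sum_mahlerCoeff d hd) (mahlerCoeff_zero_nonneg d (by omega))
    (mem_range.2 (by omega)) (mahlerCoeff_one_pos d hd)
    (fun k hk h3 => mahlerCoeff_nonpos d k h3 (Nat.lt_succ_iff.1 (mem_range.1 hk))) hx0 hx1
end

section
/- The Mahler volume product for isocanted cubes satisfies (ℓ-a)^{d-1}(ℓ+(d-1)a) · (2^{d+1}/(ℓ^d d!)) · Σ_{j=0}^{d-1} C(d+j-1, j)·(ℓ/(2(ℓ-a)))^j ≥ 4^d/d! for all 0 < a < ℓ and d ≥ 2. -/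
/-!
Write `d = n + 1` and `x = ℓ / (2 (ℓ - a)) ≥ 1/2`. After clearing the factors of `ℓ - a`, the
inequality becomes `2 · 4ⁿ xⁿ⁺¹ ≤ (2 (n + 1) x - n) P(x)` with `P(x) = ∑_{j ≤ n} C(n+j, j) xʲ`,
an equality at `x = 1/2`. The partial row sums `s_j = ∑_{i ≤ j} C(n+j+1, i)` satisfy
`s_j = 2 s_{j-1} + C(n+j, j)` and `s_n = 4ⁿ`, which telescopes to
`(2x - 1) ∑ s_j xʲ + P(x) = 2 · 4ⁿ xⁿ⁺¹`. Hence the difference of the two sides is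
`(2x - 1) ∑_j ((n + 1) C(n+j, j) - s_j) xʲ`, and its coefficients are nonnegative because
`j ↦ C(n+j, j)` at least doubles at each step while `j < n`.
-/

open Finset Nat

theorem two_mul_choose_le_choose_succ {n j : ℕ} (h : j + 1 ≤ n) :
    2 * (n + j).choose j ≤ (n + j + 1).choose (j + 1) := by
  have hrec := Nat.add_one_mul_choose_eq (n + j) j
  have : 2 * (n + j).choose j * (j + 1) ≤ (n + j + 1).choose (j + 1) * (j + 1) := by
    rw [← hrec, mul_right_comm]
    exact Nat.mul_le_mul_right _ (by omega)
  exact Nat.le_of_mul_le_mul_right this j.succ_pos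

theorem sum_range_succ_choose_succ (N k : ℕ) :
    ∑ i ∈ range (k + 2), (N + 1).choose i =
      2 * ∑ i ∈ range (k + 1), N.choose i + N.choose (k + 1) := by
  rw [sum_range_succ', sum_congr rfl fun i _ => Nat.choose_succ_succ' N i, sum_add_distrib,
    sum_range_succ (fun i => N.choose (i + 1)), sum_range_succ' (fun i => N.choose i) k]
  simp only [Nat.choose_zero_right]
  ring

theorem sum_range_choose_le_mul_choose {n j : ℕ} (hj : j ≤ n) :
    ∑ i ∈ range (j + 1), (n + j + 1).choose i ≤ (j + 1) * (n + j).choose j := by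
  induction j with
  | zero => simp
  | succ j ih =>
    rw [show n + (j + 1) + 1 = n + j + 1 + 1 by ring, sum_range_succ_choose_succ,
      show n + (j + 1) = n + j + 1 by ring]
    have := two_mul_choose_le_choose_succ hj
    nlinarith [ih (by omega)]

theorem mul_sub_one_mul_sum_add_sum_eq {R : Type*} [CommRing R] (r x : R) (c s : ℕ → R)
    (h₀ : s 0 = c 0) (hs : ∀ j, s (j + 1) = r * s j + c (j + 1)) (N : ℕ) :
    (r * x - 1) * ∑ j ∈ range (N + 1), s j * x ^ j + ∑ j ∈ range (N + 1), c j * x ^ j =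
      r * s N * x ^ (N + 1) := by
  induction N with
  | zero => simp [h₀]; ring
  | succ N ih =>
    rw [sum_range_succ _ (N + 1), sum_range_succ _ (N + 1), hs]
    linear_combination ih

theorem two_mul_four_pow_mul_pow_le (n : ℕ) {x : ℝ} (hx : 1 / 2 ≤ x) :
    2 * 4 ^ n * x ^ (n + 1) ≤
      (2 * (n + 1) * x - n) * ∑ j ∈ range (n + 1), ((n + j).choose j : ℝ) * x ^ j := by
  set s : ℕ → ℝ := fun j => ((∑ i ∈ range (j + 1), (n + j + 1).choose i : ℕ) : ℝ)
  have htelescope := mul_sub_one_mul_sum_add_sum_eq 2 x (fun j => ((n + j).choose j : ℝ)) s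
    (by simp [s]) (fun j => by
      simp only [s]
      rw [show n + (j + 1) + 1 = n + j + 1 + 1 by ring, sum_range_succ_choose_succ]
      push_cast
      ring_nf) n
  have hs_n : s n = 4 ^ n := by
    simp only [s]
    rw [show n + n + 1 = 2 * n + 1 by ring, Nat.sum_range_choose_halfway]
    norm_num
  have hcoeff : 0 ≤ ∑ j ∈ range (n + 1), ((n + 1) * ((n + j).choose j : ℝ) - s j) * x ^ j := by
    refine sum_nonneg fun j hj => mul_nonneg ?_ (by positivity)
    have hjn := Nat.lt_succ_iff.mp (mem_range.mp hj)
    have hs_j : s j ≤ (j + 1) * ((n + j).choose j : ℝ) := by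
      simp only [s]
      exact_mod_cast sum_range_choose_le_mul_choose hjn
    have : (j : ℝ) ≤ n := by exact_mod_cast hjn
    nlinarith [(Nat.cast_nonneg ((n + j).choose j) : (0 : ℝ) ≤ _)]
  simp only [sub_mul, sum_sub_distrib, mul_assoc, ← mul_sum] at hcoeff
  rw [hs_n] at htelescope
  have h2x : (0 : ℝ) ≤ 2 * x - 1 := by linarith
  linear_combination mul_nonneg h2x hcoeff - htelescope

theorem mahler_for_isocanted (d : ℕ) (hd : 2 ≤ d) (ℓ a : ℝ) (ha : 0 < a) (haℓ : a < ℓ) :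
    (ℓ - a) ^ (d - 1) * (ℓ + ((d : ℝ) - 1) * a) *
        (2 ^ (d + 1) / (ℓ ^ d * (Nat.factorial d))) *
        ∑ j ∈ Finset.range d,
          (Nat.choose (d + j - 1) j : ℝ) * (ℓ / (2 * (ℓ - a))) ^ j ≥
      4 ^ d / (Nat.factorial d) := by
  obtain ⟨n, rfl⟩ : ∃ n, d = n + 1 := ⟨d - 1, by omega⟩
  have hc : 0 < ℓ - a := by linarith
  set x := ℓ / (2 * (ℓ - a)) with hx_def
  have hx : 1 / 2 ≤ x := by rw [hx_def, le_div_iff₀ (by positivity)]; linarith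
  have hℓ : ℓ = 2 * x * (ℓ - a) := by rw [hx_def]; field_simp
  have key := two_mul_four_pow_mul_pow_le n hx
  simp only [Nat.add_sub_cancel, Nat.cast_add, Nat.cast_one, add_sub_cancel_right,
    show ∀ j, n + 1 + j - 1 = n + j from fun j => by omega]
  clear_value x
  generalize hc_def : ℓ - a = c at hc hℓ ⊢
  obtain rfl : a = ℓ - c := by linarith
  subst hℓ
  calc _ = 4 ^ (n + 1) / (n + 1)! * ((2 * (n + 1) * x - n) *
          (∑ j ∈ range (n + 1), ((n + j).choose j : ℝ) * x ^ j) / (2 * 4 ^ n * x ^ (n + 1))) := by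
        field_simp
        ring
    _ ≥ 4 ^ (n + 1) / (n + 1)! :=
        le_mul_of_one_le_right (by positivity) ((one_le_div (by positivity)).2 key)
end

section
/- The set {x ∈ ℝ^d : -ℓ/2 ≤ x_j ≤ ℓ/2 for all j, and a-ℓ ≤ x_j - x_k ≤ ℓ-a for all j ≠ k} equals the Minkowski sum Σ_{i=1}^{d+1} [-y_i, y_i], where y_i = (ℓ-a)e_i/2 for i ∈ [d] and y_{d+1} = a(e_1+⋯+e_d)/2. -/
lemma seg_mem_iff (d : ℕ) (v : Fin d → ℝ) (z : Fin d → ℝ) :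
    z ∈ segment ℝ (-v) v ↔ ∃ t : ℝ, -1 ≤ t ∧ t ≤ 1 ∧ z = t • v := by
  constructor
  · rintro ⟨u, w, hu, hw, huw, rfl⟩
    exact ⟨w - u, by linarith, by linarith, by module⟩
  · rintro ⟨t, ht1, ht2, rfl⟩
    exact ⟨(1 - t) / 2, (1 + t) / 2, by linarith, by linarith, by ring, by module⟩

lemma sum_comp (d : ℕ) (ℓ a : ℝ) (y : Fin (d + 1) → Fin d → ℝ)
    (hy : ∀ i : Fin (d + 1), y i =
      if h : (i : ℕ) < d then ((ℓ - a) / 2) • (Pi.single (⟨i, h⟩ : Fin d) (1 : ℝ) : Fin d → ℝ)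
      else (a / 2) • ((fun _ => 1) : Fin d → ℝ))
    (t : Fin (d + 1) → ℝ) (j : Fin d) :
    (∑ i : Fin (d + 1), t i • y i) j
      = t (Fin.castSucc j) * ((ℓ - a) / 2) + t (Fin.last d) * (a / 2) := by
  rw [Finset.sum_apply, Fin.sum_univ_castSucc]
  have h1 : ∀ i : Fin d, (t (Fin.castSucc i) • y (Fin.castSucc i)) j
      = if j = i then t (Fin.castSucc i) * ((ℓ - a) / 2) else 0 := by
    intro i
    rw [hy]
    have hi : ((Fin.castSucc i : Fin (d+1)) : ℕ) < d := i.isLt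
    rw [dif_pos hi]
    simp only [Pi.smul_apply, Pi.single_apply, smul_eq_mul]
    split <;> split <;> simp_all [Fin.ext_iff]
  have h2 : (t (Fin.last d) • y (Fin.last d)) j = t (Fin.last d) * (a / 2) := by
    rw [hy]
    rw [dif_neg (by simp)]
    simp [mul_comm]
  rw [h2]
  congr 1
  rw [Finset.sum_congr rfl (fun i _ => h1 i), Finset.sum_ite_eq]
  simp

open Pointwise in
theorem isocanted_is_zonotope (d : ℕ) (hd : 2 ≤ d) (ℓ a : ℝ) (ha : 0 < a) (haℓ : a < ℓ)
    (y : Fin (d + 1) → Fin d → ℝ)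
    (hy : ∀ i : Fin (d + 1), y i =
      if h : (i : ℕ) < d then ((ℓ - a) / 2) • (Pi.single (⟨i, h⟩ : Fin d) (1 : ℝ) : Fin d → ℝ)
      else (a / 2) • ((fun _ => 1) : Fin d → ℝ)) :
    {x : Fin d → ℝ |
        (∀ j, -ℓ / 2 ≤ x j ∧ x j ≤ ℓ / 2) ∧
        ∀ j k, j ≠ k → a - ℓ ≤ x j - x k ∧ x j - x k ≤ ℓ - a} =
      ∑ i : Fin (d + 1), segment ℝ (-(y i)) (y i) := by
  haveI : Nonempty (Fin d) := ⟨⟨0, by omega⟩⟩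
  have hla : (0:ℝ) < (ℓ - a) / 2 := by linarith
  ext x
  simp only [Set.mem_setOf_eq, Set.mem_fintype_sum]
  constructor
  · rintro ⟨h1, h2⟩
    set M := Finset.univ.sup' Finset.univ_nonempty x with hM
    obtain ⟨k, -, hk⟩ := Finset.exists_mem_eq_sup' Finset.univ_nonempty x
    have hMx : ∀ j, x j ≤ M := fun j => Finset.le_sup' x (Finset.mem_univ j)
    have hMk : M = x k := hk
    have hMl : M ≤ ℓ / 2 := by linarith [(h1 k).2]
    set c : ℝ := max (-(a/2)) (M - (ℓ - a)/2) with hc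
    have hc1 : -(a/2) ≤ c := le_max_left _ _
    have hc2 : c ≤ a/2 := max_le (by linarith) (by linarith)
    have hub : ∀ j, x j - c ≤ (ℓ - a)/2 := fun j => by
      have := le_max_right (-(a/2)) (M - (ℓ - a)/2)
      have := hMx j; linarith
    have hlb : ∀ j, c - x j ≤ (ℓ - a)/2 := by
      intro j
      have hA : -(a/2) - x j ≤ (ℓ - a)/2 := by linarith [(h1 j).1]
      have hB : (M - (ℓ - a)/2) - x j ≤ (ℓ - a)/2 := by
        rcases eq_or_ne k j with rfl | hkj
        · linarith
        · have := (h2 k j hkj).2; linarith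
      rcases max_cases (-(a/2)) (M - (ℓ - a)/2) with ⟨h, -⟩ | ⟨h, -⟩ <;>
        rw [hc, h] <;> linarith
    set t : Fin (d + 1) → ℝ := fun i =>
      if h : (i : ℕ) < d then (x ⟨i, h⟩ - c) / ((ℓ - a)/2) else c / (a/2) with ht
    refine ⟨fun i => t i • y i, fun i => ?_, ?_⟩
    · rw [seg_mem_iff]
      refine ⟨t i, ?_, ?_, rfl⟩ <;> rw [ht] <;> dsimp only <;> split
      · rw [neg_le, ← neg_div, div_le_one hla]; linarith [hlb ⟨i, by assumption⟩]
      · rw [neg_le, ← neg_div, div_le_one (by linarith : (0:ℝ) < a/2)]; linarith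
      · rw [div_le_one hla]; linarith [hub ⟨i, by assumption⟩]
      · rw [div_le_one (by linarith : (0:ℝ) < a/2)]; linarith
    · funext j
      rw [sum_comp d ℓ a y hy t j, ht]
      have hj : ((Fin.castSucc j : Fin (d+1)) : ℕ) < d := j.isLt
      dsimp only
      rw [dif_pos hj, dif_neg (by simp)]
      have : (⟨(Fin.castSucc j : Fin (d+1)), hj⟩ : Fin d) = j := by
        simp [Fin.ext_iff]
      rw [this, div_mul_cancel₀ _ (ne_of_gt hla),
        div_mul_cancel₀ _ (by linarith : (a:ℝ)/2 ≠ 0)]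
      ring
  · rintro ⟨g, hg, rfl⟩
    have : ∀ i, ∃ t : ℝ, -1 ≤ t ∧ t ≤ 1 ∧ g i = t • y i := by
      intro i; exact (seg_mem_iff d (y i) (g i)).1 (hg i)
    choose t ht1 ht2 ht3 using this
    have hgy : ∀ j : Fin d, (∑ i : Fin (d+1), g i) j
        = t (Fin.castSucc j) * ((ℓ - a) / 2) + t (Fin.last d) * (a / 2) := by
      intro j
      rw [show (fun i => g i) = fun i => t i • y i from funext ht3]
      exact sum_comp d ℓ a y hy t j
    constructor
    · intro j
      rw [hgy j]
      constructor <;>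
        nlinarith [ht1 (Fin.castSucc j), ht2 (Fin.castSucc j), ht1 (Fin.last d),
          ht2 (Fin.last d), hla]
    · intro j k hjk
      rw [hgy j, hgy k]
      constructor <;>
        nlinarith [ht1 (Fin.castSucc j), ht2 (Fin.castSucc j), ht1 (Fin.castSucc k),
          ht2 (Fin.castSucc k), hla]
end

section
/- For d ≥ 2 and 1 ≤ j ≤ d-1, the sum Σ C(d, d-V)·C(d-V-1+n, n), taken over pairs (V, n) with 1 ≤ V ≤ d-1, 0 ≤ n ≤ V-1 and V - n = d - j, equals C(d+j-1, j). -/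
/-!
Writing `V = n + (d - j)`, the pairs `(V, n)` are parametrised by `n < j`, and the summand becomes
`C(d, j - n) · C(j - 1, n)`; the sum is then Vandermonde's convolution for `C(d + (j - 1), j)`.
-/

open Finset

theorem Nat.sum_range_choose_mul_choose_eq_choose_add (m k : ℕ) :
    ∑ n ∈ range (k + 1), m.choose (k + 1 - n) * k.choose n = (m + k).choose (k + 1) := by
  rw [Nat.add_choose_eq, ← Nat.sum_antidiagonal_swap]
  simp only [Prod.fst_swap, Prod.snd_swap]
  rw [Nat.sum_antidiagonal_eq_sum_range_succ (fun a b => m.choose b * k.choose a),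
    sum_range_succ _ (k + 1), Nat.choose_succ_self, mul_zero, add_zero]

theorem filter_pairs_sub_eq_eq_image (d j : ℕ) (hj : j < d) :
    (range (d + 1) ×ˢ range (d + 1)).filter
        (fun p => 1 ≤ p.1 ∧ p.1 ≤ d - 1 ∧ p.2 + 1 ≤ p.1 ∧ p.1 - p.2 = d - j) =
      (range j).image fun n => (n + (d - j), n) := by
  ext ⟨V, n⟩
  simp only [mem_filter, mem_product, mem_range, mem_image, Prod.mk.injEq]
  constructor
  · intro h
    exact ⟨n, by omega, by omega, rfl⟩
  · rintro ⟨n, hn, rfl, rfl⟩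
    omega

theorem sum_over_ordinary_facets_general (d j : ℕ) (hj1 : 1 ≤ j) (hj2 : j ≤ d - 1) :
    ∑ p ∈ (Finset.range (d + 1) ×ˢ Finset.range (d + 1)).filter
        (fun p => 1 ≤ p.1 ∧ p.1 ≤ d - 1 ∧ p.2 + 1 ≤ p.1 ∧ p.1 - p.2 = d - j),
      Nat.choose d (d - p.1) * Nat.choose (d - p.1 - 1 + p.2) p.2 =
      Nat.choose (d + j - 1) j := by
  obtain ⟨k, rfl⟩ : ∃ k, j = k + 1 := ⟨j - 1, by omega⟩
  rw [filter_pairs_sub_eq_eq_image d (k + 1) (by omega),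
    sum_image fun _ _ _ _ h => congrArg Prod.snd h,
    show d + (k + 1) - 1 = d + k by omega, ← Nat.sum_range_choose_mul_choose_eq_choose_add]
  refine sum_congr rfl fun n hn => ?_
  have hn : n < k + 1 := mem_range.mp hn
  rw [show d - (n + (d - (k + 1))) = k + 1 - n by omega,
    show k + 1 - n - 1 + n = k by omega]

theorem sum_over_ordinary_facets (d j : ℕ) (hd : 2 ≤ d) (hj1 : 1 ≤ j) (hj2 : j ≤ d - 1) :
    ∑ p ∈ (Finset.range (d + 1) ×ˢ Finset.range (d + 1)).filter
        (fun p => 1 ≤ p.1 ∧ p.1 ≤ d - 1 ∧ p.2 + 1 ≤ p.1 ∧ p.1 - p.2 = d - j),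
      Nat.choose d (d - p.1) * Nat.choose (d - p.1 - 1 + p.2) p.2 =
      Nat.choose (d + j - 1) j :=
  sum_over_ordinary_facets_general d j hj1 hj2
end
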